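/- Let g : X^ℕ → X^ℕ be (the boundary map of) a tree endomorphism of subexponential activity growth, i.e. for every fixed c > 1 one has R_g(n) ≤ c^n for all sufficiently large n. Then for every non-atomic shift-invariant Markov measure μ on X^ℕ, one has μ(Ω_g) = 0 and μ(g^{-1}(Ω_g)) = 0. -/

import Mathlib

open MeasureTheory Filter Topology
open scoped ENNReal

namespace AutoMarkov

variable {X : Type*} {S : Type*}

/-- The cylinder set of sequences starting with the finite word `w`. -/
def cylinder (w : List X) : Set (ℕ → X) :=
  {ω | ∀ i : Fin w.length, ω i = w.get i}

/-- Product of transition probabilities `L x y₁ * L y₁ y₂ * ⋯` along a word. -/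
noncomputable def chainWeight (L : X → X → ℝ≥0∞) : X → List X → ℝ≥0∞
  | _, [] => 1
  | x, y :: v => L x y * chainWeight L y v

/-- The Markov weight `l_{x₁} L_{x₁x₂} ⋯ L_{x_{n-1}x_n}` of a finite word. -/
noncomputable def cylWeight (l : X → ℝ≥0∞) (L : X → X → ℝ≥0∞) : List X → ℝ≥0∞
  | [] => 1
  | x :: v => l x * chainWeight L x v

/-- The one-sided shift on sequences. -/
def shift : (ℕ → X) → ℕ → X := fun ω n => ω (n + 1)

/-- A tree endomorphism: preserves word length and the prefix relation. -/
def IsTreeEndo (g : List X → List X) : Prop :=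
  (∀ w, (g w).length = w.length) ∧ ∀ u w : List X, u <+: w → g u <+: g w

/-- Restriction (section) of `g` by the word `u`: the unique map with
`g (u ++ w) = g u ++ restrict g u w`. -/
def restrict (g : List X → List X) (u : List X) : List X → List X :=
  fun w => (g (u ++ w)).drop u.length

/-- `activity g n` is the number of words of length `n` with nontrivial restriction. -/
noncomputable def activity (g : List X → List X) (n : ℕ) : ℕ :=
  Set.ncard {w : List X | w.length = n ∧ restrict g w ≠ id}

/-- `g` is finite-state if it has only finitely many distinct restrictions. -/
def FiniteState (g : List X → List X) : Prop :=
  (Set.range fun u => restrict g u).Finite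

/-- Polynomial activity growth: `R_g(n) ≤ c n^α` for some `c, α > 0`. -/
def PolyActivity (g : List X → List X) : Prop :=
  ∃ c α : ℝ, 0 < c ∧ 0 < α ∧ ∀ n : ℕ, 1 ≤ n → (activity g n : ℝ) ≤ c * (n : ℝ) ^ α

/-- Subexponential activity growth: for every `c > 1`, `R_g(n) ≤ c^n` eventually. -/
def SubexpActivity (g : List X → List X) : Prop :=
  ∀ c : ℝ, 1 < c → ∀ᶠ n : ℕ in atTop, (activity g n : ℝ) ≤ c ^ n

/-- The boundary map on infinite sequences induced by a tree endomorphism. -/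
def treeBoundary (g : List X → List X) : (ℕ → X) → ℕ → X :=
  fun ω n => (g (List.ofFn fun i : Fin (n + 1) => ω i)).getD n (ω n)

/-- `V(g)`: words `w` such that `g|_u` is trivial for every `u` with `g u = w`. -/
def Vset (g : List X → List X) : Set (List X) :=
  {w | ∀ u, g u = w → restrict g u = id}

/-- `V_max(g)`: elements of `V(g)` having no proper prefix in `V(g)`. -/
def Vmax (g : List X → List X) : Set (List X) :=
  {w ∈ Vset g | ∀ v ∈ Vset g, v <+: w → v = w}

/-- `Ω_g = X^ℕ \ ⋃_{w ∈ V_max(g)} w X^ℕ`. -/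
def OmegaSet (g : List X → List X) : Set (ℕ → X) :=
  (⋃ w ∈ Vmax g, cylinder w)ᶜ

/-! ### prefixes -/

def pre (ω : ℕ → X) (n : ℕ) : List X := List.ofFn fun i : Fin n => ω i

@[simp] lemma pre_length (ω : ℕ → X) (n : ℕ) : (pre ω n).length = n := by
  simp [pre]

lemma pre_getElem (ω : ℕ → X) {n i : ℕ} (h : i < n) :
    (pre ω n)[i]'(by simpa using h) = ω i := by
  simp [pre]

lemma pre_succ (ω : ℕ → X) (n : ℕ) : pre ω (n + 1) = pre ω n ++ [ω n] := by
  show List.ofFn _ = _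
  rw [List.ofFn_succ']
  simp [pre, List.concat_eq_append]

lemma pre_take (ω : ℕ → X) {m n : ℕ} (h : m ≤ n) : (pre ω n).take m = pre ω m := by
  apply List.ext_getElem (by simp [h])
  intro i h1 h2
  have h2' : i < m := by simpa using h2
  simp only [List.getElem_take]
  rw [pre_getElem ω (lt_of_lt_of_le h2' h), pre_getElem ω h2']

lemma pre_prefix (ω : ℕ → X) {m n : ℕ} (h : m ≤ n) : pre ω m <+: pre ω n := by
  rw [← pre_take ω h]; exact List.take_prefix _ _

lemma mem_cylinder_iff {w : List X} {ω : ℕ → X} : ω ∈ cylinder w ↔ pre ω w.length = w := by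
  constructor
  · intro h
    apply List.ext_getElem (by simp)
    intro i h1 h2
    rw [pre_getElem ω (by simpa using h2)]
    exact h ⟨i, h2⟩
  · intro h i
    rw [List.get_eq_getElem]
    have h1 := pre_getElem ω (i.isLt : (i : ℕ) < w.length)
    exact h1.symm.trans (List.getElem_of_eq h _)

lemma mem_cylinder_pre (ω : ℕ → X) (n : ℕ) : ω ∈ cylinder (pre ω n) := by
  rw [mem_cylinder_iff, pre_length]

lemma mem_cylinder_of_prefix {w : List X} {ω : ℕ → X} {n : ℕ}
    (h : w <+: pre ω n) : ω ∈ cylinder w := by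
  rw [mem_cylinder_iff]
  obtain ⟨t, ht⟩ := h
  have hl : w.length ≤ n := by
    have := congrArg List.length ht
    simp at this; omega
  rw [← pre_take ω hl, ← ht, List.take_left]

lemma cylinder_subset_of_prefix {v w : List X} (h : v <+: w) :
    cylinder w ⊆ cylinder v := by
  intro ω hω
  have := mem_cylinder_iff.1 hω
  exact mem_cylinder_of_prefix (this ▸ h)

@[simp] lemma cylinder_nil : cylinder ([] : List X) = Set.univ := by
  ext ω; simp [cylinder]

lemma measurableSet_cylinder [MeasurableSpace X] [MeasurableSingletonClass X] (w : List X) :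
    MeasurableSet (cylinder w) := by
  have : cylinder w = ⋂ i : Fin w.length, (fun ω : ℕ → X => ω i) ⁻¹' {w.get i} := by
    ext ω; simp [cylinder]
  rw [this]
  exact MeasurableSet.iInter fun i =>
    (measurable_pi_apply (i : ℕ)) (measurableSet_singleton _)

lemma singleton_eq_iInter (ω : ℕ → X) : {ω} = ⋂ n, cylinder (pre ω n) := by
  ext ω'
  simp only [Set.mem_singleton_iff, Set.mem_iInter]
  constructor
  · rintro rfl n; exact mem_cylinder_pre _ n
  · intro h
    funext i
    have := (mem_cylinder_iff.1 (h (i + 1)))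
    have heq : pre ω' (i+1) = pre ω (i+1) := by simpa using this
    have h2 := (pre_getElem ω' (show i < i+1 by omega)).symm.trans
      ((List.getElem_of_eq heq (by simp)).trans (pre_getElem ω (show i < i+1 by omega)))
    exact h2

variable {l : X → ℝ≥0∞} {L : X → X → ℝ≥0∞}


lemma chainWeight_le_one (hL1 : ∀ x y, L x y ≤ 1) (x : X) (v : List X) : chainWeight L x v ≤ 1 := by
  induction v generalizing x with
  | nil => simp [chainWeight]
  | cons y v ih =>
      calc chainWeight L x (y :: v) = L x y * chainWeight L y v := rfl
        _ ≤ 1 * 1 := mul_le_mul' (hL1 x y) (ih y)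
        _ = 1 := one_mul 1

lemma cylWeight_le_one (hL1 : ∀ x y, L x y ≤ 1) (hl1 : ∀ x, l x ≤ 1) (w : List X) : cylWeight l L w ≤ 1 := by
  cases w with
  | nil => simp [cylWeight]
  | cons x v =>
      calc cylWeight l L (x :: v) = l x * chainWeight L x v := rfl
        _ ≤ 1 * 1 := mul_le_mul' (hl1 x) (chainWeight_le_one hL1 x v)
        _ = 1 := one_mul 1

lemma chainWeight_append (x : X) (v v' : List X) :
    chainWeight L x (v ++ v') =
      chainWeight L x v * chainWeight L ((x :: v).getLast (by simp)) v' := by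
  induction v generalizing x with
  | nil => simp [chainWeight]
  | cons y v ih =>
      show L x y * chainWeight L y (v ++ v') = _
      rw [ih y]
      rw [show (x :: y :: v).getLast (by simp) = (y :: v).getLast (by simp) from
        List.getLast_cons (by simp)]
      show _ = L x y * chainWeight L y v * _
      ring

lemma cylWeight_append {w : List X} (hw : w ≠ []) (v : List X) :
    cylWeight l L (w ++ v) = cylWeight l L w * chainWeight L (w.getLast hw) v := by
  cases w with
  | nil => exact absurd rfl hw
  | cons x u =>
      show cylWeight l L (x :: (u ++ v)) = _
      show l x * chainWeight L x (u ++ v) = _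
      rw [chainWeight_append x u v]
      show _ = l x * chainWeight L x u * _
      ring

lemma cylWeight_prefix_le (hL1 : ∀ x y, L x y ≤ 1) (hl1 : ∀ x, l x ≤ 1) (w v : List X) :
    cylWeight l L (w ++ v) ≤ cylWeight l L w := by
  cases w with
  | nil => simpa [cylWeight] using cylWeight_le_one hL1 hl1 v
  | cons x u =>
      rw [cylWeight_append (l := l) (by simp) v]
      calc cylWeight l L (x :: u) * chainWeight L _ v
          ≤ cylWeight l L (x :: u) * 1 := mul_le_mul' le_rfl (chainWeight_le_one hL1 _ _)
        _ = _ := mul_one _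

/-- maximal weight of a word of given length -/
noncomputable def maxW (l : X → ℝ≥0∞) (L : X → X → ℝ≥0∞) (n : ℕ) : ℝ≥0∞ :=
  ⨆ (w : List X) (_ : w.length = n), cylWeight l L w

lemma le_maxW {w : List X} {n : ℕ} (h : w.length = n) : cylWeight l L w ≤ maxW l L n := by
  exact le_iSup₂ (f := fun (w : List X) (_ : w.length = n) => cylWeight l L w) w h

lemma maxW_le_one (hL1 : ∀ x y, L x y ≤ 1) (hl1 : ∀ x, l x ≤ 1) (n : ℕ) :
    maxW l L n ≤ 1 :=
  iSup₂_le fun w _ => cylWeight_le_one hL1 hl1 w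

lemma maxW_antitone (hL1 : ∀ x y, L x y ≤ 1) (hl1 : ∀ x, l x ≤ 1) :
    Antitone (maxW l L) := by
  intro m n h
  refine iSup₂_le fun w hw => ?_
  calc cylWeight l L w = cylWeight l L (w.take m ++ w.drop m) := by rw [List.take_append_drop]
    _ ≤ cylWeight l L (w.take m) := cylWeight_prefix_le hL1 hl1 _ _
    _ ≤ maxW l L m := le_maxW (by simp [hw]; omega)

/-- stationarity propagates positivity of `l` along positive chains -/
lemma l_getLast_ne_zero [Fintype X] (hstat : ∀ y, ∑ x : X, l x * L x y = l y)
    {x : X} {v : List X} (hx : l x ≠ 0) (hv : chainWeight L x v ≠ 0) :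
    l ((x :: v).getLast (by simp)) ≠ 0 := by
  induction v generalizing x with
  | nil => simpa using hx
  | cons y v ih =>
      have h1 : L x y * chainWeight L y v ≠ 0 := hv
      have hLxy : L x y ≠ 0 := fun h => h1 (by simp [h])
      have hcy : chainWeight L y v ≠ 0 := fun h => h1 (by simp [h])
      have hy : l y ≠ 0 := by
        intro h0
        have hle : l x * L x y ≤ l y := by
          rw [← hstat y]
          exact Finset.single_le_sum (f := fun x => l x * L x y) (fun _ _ => zero_le)
            (Finset.mem_univ x)
        rw [h0, nonpos_iff_eq_zero] at hle
        exact (mul_ne_zero hx hLxy) hle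
      rw [show ((x :: y :: v).getLast (by simp)) = ((y :: v).getLast (by simp)) from
        List.getLast_cons (by simp)]
      exact ih hy hcy


/-! ### submultiplicativity and decay -/

lemma eps_exists [Fintype X] (hl1 : ∑ x : X, l x = 1) :
    ∃ ε : ℝ≥0∞, ε ≠ 0 ∧ ε ≠ ⊤ ∧ ∀ x, l x ≠ 0 → ε ≤ l x := by
  classical
  have hne : (Finset.univ.filter fun x : X => l x ≠ 0).Nonempty := by
    by_contra h
    rw [Finset.not_nonempty_iff_eq_empty] at h
    have : ∑ x : X, l x = 0 := by
      apply Finset.sum_eq_zero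
      intro x hx
      by_contra hx0
      have : x ∈ Finset.univ.filter fun x : X => l x ≠ 0 := by
        simp [hx0]
      simp [h] at this
    rw [hl1] at this; exact one_ne_zero this
  refine ⟨(Finset.univ.filter fun x : X => l x ≠ 0).inf' hne l, ?_, ?_, ?_⟩
  · obtain ⟨x, hx, hval⟩ := Finset.exists_mem_eq_inf' hne l
    rw [hval]
    simpa using (Finset.mem_filter.1 hx).2
  · obtain ⟨x, hx, hval⟩ := Finset.exists_mem_eq_inf' hne l
    rw [hval]
    have : l x ≤ 1 := by
      rw [← hl1]
      exact Finset.single_le_sum (f := l) (fun _ _ => zero_le) (Finset.mem_univ x)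
    exact fun ht => by simp [ht] at this
  · intro x hx
    exact Finset.inf'_le l (by simp [hx])

lemma getLast_cast {l₁ l₂ : List X} (h : l₁ = l₂) (h1 : l₁ ≠ []) :
    l₁.getLast h1 = l₂.getLast (h ▸ h1) := by subst h; rfl

lemma maxW_submul [Fintype X] (hL1 : ∀ x y, L x y ≤ 1) (hl1 : ∀ x, l x ≤ 1)
    (hstat : ∀ y, ∑ x : X, l x * L x y = l y)
    {ε : ℝ≥0∞} (hε : ∀ x, l x ≠ 0 → ε ≤ l x) {n : ℕ} (hn : 1 ≤ n) (m : ℕ) :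
    ε * maxW l L (n + m) ≤ maxW l L n * maxW l L (m + 1) := by
  rw [maxW, ENNReal.mul_iSup]
  refine iSup_le fun w => ?_
  rw [ENNReal.mul_iSup]
  refine iSup_le fun hw => ?_
  by_cases h0 : cylWeight l L w = 0
  · simp [h0]
  have hsplit : w = w.take n ++ w.drop n := (List.take_append_drop n w).symm
  have hlen1 : (w.take n).length = n := by simp [hw] <;> omega
  have htne : w.take n ≠ [] := by
    intro h; rw [h] at hlen1; simp at hlen1; omega
  have key : cylWeight l L w
      = cylWeight l L (w.take n) * chainWeight L ((w.take n).getLast htne) (w.drop n) := by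
    conv_lhs => rw [hsplit]
    exact cylWeight_append htne _
  set x := (w.take n).getLast htne with hx
  have h1 : cylWeight l L (w.take n) ≠ 0 := by
    intro h; rw [key, h] at h0; simp at h0
  have h2 : chainWeight L x (w.drop n) ≠ 0 := by
    intro h; rw [key, h] at h0; simp at h0
  have hlx : l x ≠ 0 := by
    obtain ⟨a, u, hau⟩ := List.exists_cons_of_ne_nil htne
    have hla : l a ≠ 0 := by
      intro h; rw [hau] at h1; exact h1 (by simp [cylWeight, h])
    have hch : chainWeight L a u ≠ 0 := by
      intro h; rw [hau] at h1; exact h1 (by simp [cylWeight, h])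
    have := l_getLast_ne_zero hstat hla hch
    show l ((List.take n w).getLast htne) ≠ 0
    rw [getLast_cast hau htne]
    exact this
  calc ε * cylWeight l L w = ε * (cylWeight l L (w.take n) * chainWeight L x (w.drop n)) := by
        rw [key]
    _ = cylWeight l L (w.take n) * (ε * chainWeight L x (w.drop n)) := by ring
    _ ≤ cylWeight l L (w.take n) * (l x * chainWeight L x (w.drop n)) :=
        mul_le_mul' le_rfl (mul_le_mul' (hε x hlx) le_rfl)
    _ = cylWeight l L (w.take n) * cylWeight l L (x :: w.drop n) := rfl
    _ ≤ maxW l L n * maxW l L (m + 1) := by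
        refine mul_le_mul' (le_maxW hlen1) (le_maxW ?_)
        simp [hw] <;> omega

/-! ### maxW tends to zero -/

lemma measure_singleton_le [Fintype X] [MeasurableSpace X] [MeasurableSingletonClass X]
    (μ : Measure (ℕ → X)) (hμ : ∀ w : List X, μ (cylinder w) = cylWeight l L w)
    (ω : ℕ → X) : μ {ω} = ⨅ n, μ (cylinder (pre ω n)) := by
  rw [singleton_eq_iInter ω]
  refine Directed.measure_iInter
    (fun n => (measurableSet_cylinder _).nullMeasurableSet) ?_ ⟨0, ?_⟩
  · intro a b
    exact ⟨max a b, cylinder_subset_of_prefix (pre_prefix ω (le_max_left a b)),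
      cylinder_subset_of_prefix (pre_prefix ω (le_max_right a b))⟩
  · rw [hμ]
    simp [pre, cylWeight]

lemma tendsto_maxW [Fintype X] [MeasurableSpace X] [MeasurableSingletonClass X]
    (hL1 : ∀ x y, L x y ≤ 1) (hl1 : ∀ x, l x ≤ 1)
    (μ : Measure (ℕ → X)) (hμ : ∀ w : List X, μ (cylinder w) = cylWeight l L w)
    (hna : ∀ ω : ℕ → X, μ {ω} = 0) :
    Tendsto (maxW l L) atTop (𝓝 0) := by
  rw [ENNReal.tendsto_atTop_zero]
  intro δ hδ
  by_contra hcon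
  push_neg at hcon
  have hall : ∀ n, δ < maxW l L n := fun n => by
    obtain ⟨m, hm, hgt⟩ := hcon n
    exact lt_of_lt_of_le hgt (maxW_antitone hL1 hl1 hm)
  set K : ℕ → Set (ℕ → X) :=
    fun n => ⋃ w ∈ {w : List X | w.length = n ∧ δ ≤ cylWeight l L w}, cylinder w with hK
  have hKmem : ∀ n ω, ω ∈ K n → δ ≤ cylWeight l L (pre ω n) := by
    intro n ω hω
    simp only [hK, Set.mem_iUnion, Set.mem_setOf_eq] at hω
    obtain ⟨w, ⟨hwlen, hwW⟩, hωw⟩ := hω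
    rw [mem_cylinder_iff, hwlen] at hωw
    rwa [hωw]
  have hKmeas : ∀ n, MeasurableSet (K n) := fun n =>
    MeasurableSet.biUnion (Set.to_countable _) (fun w _ => measurableSet_cylinder w)
  have hKanti : Antitone K := by
    apply antitone_nat_of_succ_le
    intro n ω hω
    have hw := hKmem (n+1) ω hω
    simp only [hK, Set.mem_iUnion, Set.mem_setOf_eq]
    refine ⟨pre ω n, ⟨by simp, ?_⟩, mem_cylinder_pre ω n⟩
    calc δ ≤ cylWeight l L (pre ω (n+1)) := hw
      _ = cylWeight l L (pre ω n ++ [ω n]) := by rw [pre_succ]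
      _ ≤ cylWeight l L (pre ω n) := cylWeight_prefix_le hL1 hl1 _ _
  have hKm : ∀ n, δ ≤ μ (K n) := by
    intro n
    have hn := hall n
    rw [maxW, lt_iSup_iff] at hn
    obtain ⟨w, hw⟩ := hn
    rw [lt_iSup_iff] at hw
    obtain ⟨hwlen, hδw⟩ := hw
    calc δ ≤ cylWeight l L w := le_of_lt hδw
      _ = μ (cylinder w) := (hμ w).symm
      _ ≤ μ (K n) := measure_mono (Set.subset_biUnion_of_mem ⟨hwlen, le_of_lt hδw⟩)
  have hfin : μ (K 0) ≠ ⊤ := by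
    refine ne_top_of_le_ne_top ?_ (measure_mono (Set.subset_univ _))
    rw [← cylinder_nil (X := X), hμ]
    simp [cylWeight]
  have hint : δ ≤ μ (⋂ n, K n) := by
    rw [Directed.measure_iInter (fun n => (hKmeas n).nullMeasurableSet)
      (hKanti.directed_ge) ⟨0, hfin⟩]
    exact le_iInf hKm
  have hne : (⋂ n, K n).Nonempty := by
    apply MeasureTheory.nonempty_of_measure_ne_zero (μ := μ)
    intro h0
    rw [h0] at hint
    exact hδ.ne' (le_antisymm hint ((zero_le : (0:ℝ≥0∞) ≤ δ)))
  obtain ⟨ω, hω⟩ := hne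
  have hpre : ∀ n, δ ≤ μ (cylinder (pre ω n)) := by
    intro n
    rw [hμ]
    exact hKmem n ω (Set.mem_iInter.1 hω n)
  have hδω : δ ≤ μ {ω} := by
    rw [measure_singleton_le μ hμ ω]
    exact le_iInf hpre
  rw [hna ω] at hδω
  exact hδ.ne' (le_antisymm hδω ((zero_le : (0:ℝ≥0∞) ≤ δ)))

/-! ### geometric decay of maxW -/

lemma maxW_decay [Fintype X] [MeasurableSpace X] [MeasurableSingletonClass X]
    (hL : ∀ x, ∑ y : X, L x y = 1) (hl1 : ∑ x : X, l x = 1)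
    (hstat : ∀ y, ∑ x : X, l x * L x y = l y)
    (μ : Measure (ℕ → X)) (hμ : ∀ w : List X, μ (cylinder w) = cylWeight l L w)
    (hna : ∀ ω : ℕ → X, μ {ω} = 0) :
    ∃ m₀ : ℕ, 1 ≤ m₀ ∧ ∀ n, 1 ≤ n → maxW l L n ≤ 2⁻¹ ^ ((n - 1) / m₀) := by
  have hL1 : ∀ x y, L x y ≤ 1 := fun x y => by
    rw [← hL x]
    exact Finset.single_le_sum (f := fun y => L x y) (fun _ _ => zero_le) (Finset.mem_univ y)
  have hl1' : ∀ x, l x ≤ 1 := fun x => by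
    rw [← hl1]
    exact Finset.single_le_sum (f := l) (fun _ _ => zero_le) (Finset.mem_univ x)
  obtain ⟨ε, hε0, hεtop, hε⟩ := eps_exists hl1
  have htend := tendsto_maxW hL1 hl1' μ hμ hna
  rw [ENNReal.tendsto_atTop_zero] at htend
  have hpos : 0 < ε * 2⁻¹ := by
    refine ENNReal.mul_pos hε0 (by norm_num)
  obtain ⟨M, hM⟩ := htend (ε * 2⁻¹) hpos
  set m₀ := max M 1 with hm₀
  have hm₀1 : 1 ≤ m₀ := le_max_right M 1
  have hsmall : maxW l L (m₀ + 1) ≤ ε * 2⁻¹ := hM (m₀ + 1) (by omega)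
  have hstep : ∀ n, 1 ≤ n → maxW l L (n + m₀) ≤ 2⁻¹ * maxW l L n := by
    intro n hn
    have h1 : ε * maxW l L (n + m₀) ≤ maxW l L n * maxW l L (m₀ + 1) :=
      maxW_submul hL1 hl1' hstat hε hn m₀
    have h2 : maxW l L n * maxW l L (m₀ + 1) ≤ ε * (2⁻¹ * maxW l L n) := by
      calc maxW l L n * maxW l L (m₀ + 1) ≤ maxW l L n * (ε * 2⁻¹) :=
            mul_le_mul' le_rfl hsmall
        _ = ε * (2⁻¹ * maxW l L n) := by ring
    exact (ENNReal.mul_le_mul_iff_right hε0 hεtop).1 (h1.trans h2)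
  have hk : ∀ k, maxW l L (1 + k * m₀) ≤ 2⁻¹ ^ k := by
    intro k
    induction k with
    | zero => simpa using maxW_le_one hL1 hl1' 1
    | succ k ih =>
        have : 1 + (k + 1) * m₀ = (1 + k * m₀) + m₀ := by ring
        rw [this]
        calc maxW l L ((1 + k * m₀) + m₀) ≤ 2⁻¹ * maxW l L (1 + k * m₀) :=
              hstep _ (by omega)
          _ ≤ 2⁻¹ * 2⁻¹ ^ k := mul_le_mul' le_rfl ih
          _ = 2⁻¹ ^ (k + 1) := (pow_succ' _ _).symm
  refine ⟨m₀, hm₀1, fun n hn => ?_⟩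
  have hle : 1 + ((n - 1) / m₀) * m₀ ≤ n := by
    have := Nat.div_mul_le_self (n - 1) m₀
    omega
  calc maxW l L n ≤ maxW l L (1 + ((n - 1) / m₀) * m₀) := maxW_antitone hL1 hl1' hle
    _ ≤ 2⁻¹ ^ ((n - 1) / m₀) := hk _

/-! ### finiteness and covering -/

lemma finite_length_eq [Finite X] (n : ℕ) : {w : List X | w.length = n}.Finite := by
  have hsub : {w : List X | w.length = n} ⊆ Set.range (List.ofFn : (Fin n → X) → List X) := by
    intro w hw
    have hw' : w.length = n := hw
    subst hw'
    exact ⟨w.get, List.ofFn_get w⟩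
  exact (Set.finite_range _).subset hsub

lemma finite_active [Finite X] (g : List X → List X) (n : ℕ) :
    {w : List X | w.length = n ∧ restrict g w ≠ id}.Finite :=
  (finite_length_eq n).subset fun _ hw => hw.1

lemma measure_cover [MeasurableSpace X]
    (μ : Measure (ℕ → X)) (hμ : ∀ w : List X, μ (cylinder w) = cylWeight l L w)
    {m : ℕ} {T : Set (ℕ → X)} {s : Set (List X)} (hs : s.Finite)
    {F : List X → List X} (hF : ∀ u ∈ s, (F u).length = m)
    (hT : T ⊆ ⋃ u ∈ s, cylinder (F u)) :
    μ T ≤ s.ncard * maxW l L m := by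
  have heq : (⋃ u ∈ s, cylinder (F u)) = ⋃ u ∈ hs.toFinset, cylinder (F u) := by
    ext ω; simp [Set.Finite.mem_toFinset]
  calc μ T ≤ μ (⋃ u ∈ hs.toFinset, cylinder (F u)) := heq ▸ measure_mono hT
    _ ≤ ∑ u ∈ hs.toFinset, μ (cylinder (F u)) := measure_biUnion_finset_le _ _
    _ ≤ hs.toFinset.card • maxW l L m := by
        refine Finset.sum_le_card_nsmul _ _ _ fun u hu => ?_
        rw [hμ]
        exact le_maxW (hF u (hs.mem_toFinset.1 hu))
    _ = s.ncard * maxW l L m := by rw [Set.ncard_eq_toFinset_card _ hs, nsmul_eq_mul]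

/-! ### Vset and Vmax -/

lemma exists_active_of_not_mem_Vset {g : List X → List X} {w : List X} (hw : w ∉ Vset g) :
    ∃ u, g u = w ∧ restrict g u ≠ id := by
  simp only [Vset, Set.mem_setOf_eq, not_forall] at hw
  obtain ⟨u, hu, hr⟩ := hw
  exact ⟨u, hu, hr⟩

lemma omega_pre {g : List X → List X} {ω : ℕ → X} (hω : ω ∈ OmegaSet g) (n : ℕ) :
    pre ω n ∉ Vset g := by
  classical
  intro hV
  have hex : ∃ k, pre ω k ∈ Vset g := ⟨n, hV⟩
  have hv : pre ω (Nat.find hex) ∈ Vset g := Nat.find_spec hex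
  have hmax : pre ω (Nat.find hex) ∈ Vmax g := by
    refine ⟨hv, ?_⟩
    intro v hvV hpre
    have hvl : v.length ≤ Nat.find hex := by simpa using hpre.length_le
    have hveq : v = pre ω v.length := by
      rw [List.prefix_iff_eq_take] at hpre
      conv_lhs => rw [hpre, pre_take ω hvl]
    have hge : Nat.find hex ≤ v.length := Nat.find_min' hex (hveq ▸ hvV)
    rw [hveq]
    congr 1
    omega
  exact hω (Set.mem_biUnion hmax (mem_cylinder_pre ω _))

/-! ### tree endomorphism basics -/

lemma pre_treeBoundary {g : List X → List X} (hg : IsTreeEndo g) (ω : ℕ → X) (n : ℕ) :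
    pre (treeBoundary g ω) n = g (pre ω n) := by
  apply List.ext_getElem (by simp [hg.1])
  intro i h1 h2
  have hi : i < n := by simpa using h1
  rw [pre_getElem _ hi]
  have hlen : (g (pre ω (i + 1))).length = i + 1 := by rw [hg.1]; simp
  show (g (List.ofFn fun j : Fin (i + 1) => ω j)).getD i (ω i) = (g (pre ω n))[i]
  have hofn : (List.ofFn fun j : Fin (i + 1) => ω (j : ℕ)) = pre ω (i + 1) := rfl
  rw [hofn, List.getD_eq_getElem _ _ (by omega)]
  exact (hg.2 _ _ (pre_prefix ω (by omega))).getElem (by omega)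

lemma g_append_of_restrict_id {g : List X → List X} (hg : IsTreeEndo g) {p : List X}
    (hp : restrict g p = id) (t : List X) : g (p ++ t) = g p ++ t := by
  have h1 : (g (p ++ t)).drop p.length = t := congrFun hp t
  have h2 : g p <+: g (p ++ t) := hg.2 p (p ++ t) (List.prefix_append p t)
  have h3 : g p = (g (p ++ t)).take p.length := by
    rw [List.prefix_iff_eq_take] at h2
    rw [h2, hg.1]
  calc g (p ++ t) = (g (p ++ t)).take p.length ++ (g (p ++ t)).drop p.length :=
        (List.take_append_drop _ _).symm
    _ = g p ++ t := by rw [← h3, h1]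

lemma pre_add (ω : ℕ → X) (a k : ℕ) :
    pre ω (a + k) = pre ω a ++ pre (fun i => ω (a + i)) k := by
  induction k with
  | zero => simp [pre]
  | succ k ih =>
      rw [show a + (k + 1) = (a + k) + 1 by omega, pre_succ, ih,
        pre_succ (fun i => ω (a + i)) k, ← List.append_assoc]

/-! ### summability -/

lemma tsum_pow_div_ne_top {r : ℝ≥0∞} (hr : r < 1) {m₀ : ℕ} (hm₀ : 1 ≤ m₀) :
    ∑' n : ℕ, r ^ (n / m₀) ≠ ⊤ := by
  haveI : NeZero m₀ := ⟨by omega⟩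
  have h := Equiv.tsum_eq (Nat.divModEquiv m₀).symm (fun n => r ^ (n / m₀))
  rw [← h]
  have hval : ∀ p : ℕ × Fin m₀, ((Nat.divModEquiv m₀).symm p) / m₀ = p.1 := by
    intro p
    show (p.1 * m₀ + (p.2 : ℕ)) / m₀ = p.1
    rw [Nat.mul_comm, Nat.mul_add_div (by omega : 0 < m₀), Nat.div_eq_of_lt p.2.isLt]
    omega
  calc ∑' c : ℕ × Fin m₀, r ^ ((Nat.divModEquiv m₀).symm c / m₀)
      = ∑' c : ℕ × Fin m₀, r ^ c.1 := by
        congr 1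
        funext c
        rw [hval]
    _ = ∑' q : ℕ, ∑' _ : Fin m₀, r ^ q :=
        ENNReal.tsum_prod (f := fun (q : ℕ) (_ : Fin m₀) => r ^ q)
    _ = ∑' q : ℕ, (m₀ : ℝ≥0∞) * r ^ q := by
        congr 1
        funext q
        rw [tsum_fintype]
        simp [Finset.sum_const, nsmul_eq_mul]
    _ = (m₀ : ℝ≥0∞) * ∑' q : ℕ, r ^ q := ENNReal.tsum_mul_left
    _ ≠ ⊤ := by
        rw [ENNReal.tsum_geometric]
        exact ENNReal.mul_ne_top (by simp)
          (ENNReal.inv_ne_top.2 fun h => hr.not_ge (tsub_eq_zero_iff_le.1 h))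

lemma tsum_pow_div_pred_ne_top {r : ℝ≥0∞} (hr0 : r ≠ 0) (hr : r < 1) {m₀ : ℕ} (hm₀ : 1 ≤ m₀) :
    ∑' n : ℕ, r ^ ((n - 1) / m₀) ≠ ⊤ := by
  intro htop
  have hb : ∀ n : ℕ, r * r ^ ((n - 1) / m₀) ≤ r ^ (n / m₀) := by
    intro n
    rcases Nat.eq_zero_or_pos (n / m₀) with h | h
    · have hnm : n < m₀ := by
        by_contra hc
        have h1n : 1 ≤ n / m₀ := Nat.one_le_div_iff (by omega) |>.2 (by omega)
        omega
      have h1 : (n - 1) / m₀ = 0 := Nat.div_eq_of_lt (by omega)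
      rw [h, h1, pow_zero, mul_one]
      exact hr.le
    · have h3 : n / m₀ ≤ ((n - 1) + m₀) / m₀ := Nat.div_le_div_right (by omega)
      rw [Nat.add_div_right _ (by omega : 0 < m₀)] at h3
      have h2 : n / m₀ - 1 ≤ (n - 1) / m₀ := by omega
      calc r * r ^ ((n - 1) / m₀) ≤ r * r ^ (n / m₀ - 1) :=
            mul_le_mul' le_rfl (pow_le_pow_of_le_one zero_le hr.le h2)
        _ = r ^ (n / m₀ - 1 + 1) := by rw [pow_succ, mul_comm]
        _ = r ^ (n / m₀) := by congr 1; omega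
  have hle := ENNReal.tsum_le_tsum hb
  rw [ENNReal.tsum_mul_left, htop, ENNReal.mul_top hr0] at hle
  exact (tsum_pow_div_ne_top hr hm₀) (top_le_iff.1 hle)

/-! ### activity bound -/

lemma activity_bound {g : List X → List X} (hsub : SubexpActivity g) {m₀ : ℕ} (hm₀ : 1 ≤ m₀) :
    ∃ N : ℕ, ∀ n, N ≤ n → 1 ≤ n →
      (activity g n : ℝ≥0∞) ≤ (3 / 2 : ℝ≥0∞) ^ ((n - 1) / m₀ + 1) := by
  have hm₀R : (0 : ℝ) < (m₀ : ℝ) := by exact_mod_cast hm₀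
  set c : ℝ := (3 / 2 : ℝ) ^ ((m₀ : ℝ)⁻¹) with hc
  have hc1 : 1 < c := by
    rw [hc, Real.one_lt_rpow_iff_of_pos (by norm_num)]
    exact Or.inl ⟨by norm_num, by positivity⟩
  have hcm : c ^ m₀ = 3 / 2 := by
    rw [hc, ← Real.rpow_natCast ((3 / 2 : ℝ) ^ ((m₀ : ℝ)⁻¹)) m₀,
      ← Real.rpow_mul (by norm_num), inv_mul_cancel₀ (ne_of_gt hm₀R), Real.rpow_one]
  have hev := hsub c hc1
  rw [eventually_atTop] at hev
  obtain ⟨N, hN⟩ := hev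
  refine ⟨N, fun n hnN hn1 => ?_⟩
  set q := (n - 1) / m₀ with hqdef
  have hq : n ≤ m₀ * (q + 1) := by
    have h1 : n - 1 < (n - 1) / m₀ * m₀ + m₀ := Nat.lt_div_mul_add (by omega)
    have h2 : n - 1 + 1 ≤ (n - 1) / m₀ * m₀ + m₀ := h1
    rw [Nat.sub_add_cancel hn1] at h2
    calc n ≤ (n - 1) / m₀ * m₀ + m₀ := h2
      _ = m₀ * (q + 1) := by rw [← hqdef]; ring
  have hreal : (activity g n : ℝ) ≤ (3 / 2 : ℝ) ^ (q + 1) := by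
    calc (activity g n : ℝ) ≤ c ^ n := hN n hnN
      _ ≤ c ^ (m₀ * (q + 1)) := pow_le_pow_right₀ (le_of_lt hc1) hq
      _ = (c ^ m₀) ^ (q + 1) := pow_mul c m₀ (q + 1)
      _ = (3 / 2 : ℝ) ^ (q + 1) := by rw [hcm]
  calc (activity g n : ℝ≥0∞) = ENNReal.ofReal (activity g n : ℝ) := by
        rw [ENNReal.ofReal_natCast]
    _ ≤ ENNReal.ofReal ((3 / 2 : ℝ) ^ (q + 1)) := ENNReal.ofReal_le_ofReal hreal
    _ = ENNReal.ofReal (3 / 2 : ℝ) ^ (q + 1) := ENNReal.ofReal_pow (by norm_num) _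
    _ = (3 / 2 : ℝ≥0∞) ^ (q + 1) := by
        congr 1
        rw [ENNReal.ofReal_div_of_pos (by norm_num)]
        norm_num

lemma D_bound (D : ℕ → ℝ≥0∞) {m₀ : ℕ} (hm₀ : 1 ≤ m₀) {N : ℕ}
    (hD : ∀ n, N ≤ n → 1 ≤ n →
      D n ≤ (3 / 2 : ℝ≥0∞) ^ ((n - 1) / m₀ + 1) * 2⁻¹ ^ ((n - 1) / m₀))
    (hfin : ∀ n, D n ≠ ⊤) :
    Tendsto D atTop (𝓝 0) ∧ ∑' n, D n ≠ ⊤ := by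
  have h34 : (3 / 4 : ℝ≥0∞) < 1 := by
    rw [ENNReal.div_lt_iff (by norm_num) (by norm_num)]
    norm_num
  have hcomb : ∀ q : ℕ, (3 / 2 : ℝ≥0∞) ^ (q + 1) * 2⁻¹ ^ q = 3 / 2 * (3 / 4) ^ q := by
    intro q
    have h1 : (3 / 2 : ℝ≥0∞) * 2⁻¹ = 3 / 4 := by
      rw [div_eq_mul_inv, div_eq_mul_inv, mul_assoc, ← ENNReal.mul_inv (by norm_num) (by norm_num)]
      norm_num
    calc (3 / 2 : ℝ≥0∞) ^ (q + 1) * 2⁻¹ ^ q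
        = 3 / 2 * ((3 / 2 * 2⁻¹) ^ q) := by rw [mul_pow, pow_succ]; ring
      _ = 3 / 2 * (3 / 4) ^ q := by rw [h1]
  have hDle : ∀ n, N ≤ n → 1 ≤ n → D n ≤ 3 / 2 * (3 / 4) ^ ((n - 1) / m₀) := by
    intro n h1 h2
    rw [← hcomb]
    exact hD n h1 h2
  have hdivtend : Tendsto (fun n : ℕ => (n - 1) / m₀) atTop atTop := by
    rw [tendsto_atTop_atTop]
    intro b
    refine ⟨m₀ * b + 1, fun n hn => ?_⟩
    have h1 : m₀ * b ≤ n - 1 := by omega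
    calc b = m₀ * b / m₀ := by rw [Nat.mul_div_cancel_left _ (by omega : 0 < m₀)]
      _ ≤ (n - 1) / m₀ := Nat.div_le_div_right h1
  constructor
  · have htendE : Tendsto (fun n : ℕ => 3 / 2 * (3 / 4 : ℝ≥0∞) ^ ((n - 1) / m₀)) atTop (𝓝 0) := by
      have h0 : Tendsto (fun q : ℕ => (3 / 4 : ℝ≥0∞) ^ q) atTop (𝓝 0) :=
        ENNReal.tendsto_pow_atTop_nhds_zero_of_lt_one h34
      have h32top : (3 / 2 : ℝ≥0∞) ≠ ⊤ := by
        intro h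
        rw [ENNReal.div_eq_top] at h
        simp at h
      have := ENNReal.Tendsto.const_mul (a := (3 / 2 : ℝ≥0∞)) (h0.comp hdivtend)
        (Or.inr h32top)
      simpa [Function.comp, mul_zero] using this
    refine tendsto_of_tendsto_of_tendsto_of_le_of_le' tendsto_const_nhds htendE
      (Filter.Eventually.of_forall fun n => zero_le) ?_
    rw [eventually_atTop]
    exact ⟨max N 1, fun n hn => hDle n (by omega) (by omega)⟩
  · have hG : ∑' n : ℕ, (3 / 2 : ℝ≥0∞) * (3 / 4) ^ ((n - 1) / m₀) ≠ ⊤ := by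
      rw [ENNReal.tsum_mul_left]
      refine ENNReal.mul_ne_top ?_ (tsum_pow_div_pred_ne_top ?_ h34 hm₀)
      · intro h
        rw [ENNReal.div_eq_top] at h
        simp at h
      · simp [ENNReal.div_eq_zero_iff]
    set M := max N 1 with hM
    have hsplit : ∀ n, D n = (if n < M then D n else 0) + (if n < M then 0 else D n) := by
      intro n
      by_cases h : n < M <;> simp [h]
    rw [tsum_congr hsplit, ENNReal.tsum_add]
    refine ENNReal.add_ne_top.2 ⟨?_, ?_⟩
    · have heq : (∑' n : ℕ, if n < M then D n else 0)
          = ∑ n ∈ Finset.range M, if n < M then D n else 0 :=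
        tsum_eq_sum (fun b hb => by rw [Finset.mem_range] at hb; simp [hb])
      rw [heq]
      refine (ENNReal.sum_lt_top.2 fun i _ => ?_).ne
      by_cases h : i < M
      · simpa [h, lt_top_iff_ne_top] using hfin i
      · simp [h]
    · refine ne_top_of_le_ne_top hG (ENNReal.tsum_le_tsum fun n => ?_)
      by_cases h : n < M
      · simp [h]
      · simp only [h, if_false]
        exact hDle n (by omega) (by omega)

theorem stmt1 [Fintype X] [Nontrivial X] [MeasurableSpace X] [MeasurableSingletonClass X]
    (g : List X → List X) (hg : IsTreeEndo g) (hsub : SubexpActivity g)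
    (L : X → X → ℝ≥0∞) (l : X → ℝ≥0∞)
    (hL : ∀ x, ∑ y : X, L x y = 1) (hl1 : ∑ x : X, l x = 1)
    (hstat : ∀ y, ∑ x : X, l x * L x y = l y)
    (μ : Measure (ℕ → X)) (hμ : ∀ w : List X, μ (cylinder w) = cylWeight l L w)
    (hna : ∀ ω : ℕ → X, μ {ω} = 0) :
    μ (OmegaSet g) = 0 ∧ μ (treeBoundary g ⁻¹' OmegaSet g) = 0 := by
  classical
  have hL1 : ∀ x y, L x y ≤ 1 := fun x y => by
    rw [← hL x]
    exact Finset.single_le_sum (f := fun y => L x y) (fun _ _ => zero_le) (Finset.mem_univ y)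
  have hl1' : ∀ x, l x ≤ 1 := fun x => by
    rw [← hl1]
    exact Finset.single_le_sum (f := l) (fun _ _ => zero_le) (Finset.mem_univ x)
  obtain ⟨m₀, hm₀, hmaxW⟩ := maxW_decay hL hl1 hstat μ hμ hna
  obtain ⟨N₀, hact⟩ := activity_bound hsub hm₀
  set D : ℕ → ℝ≥0∞ := fun n => (activity g n : ℝ≥0∞) * maxW l L n with hD
  have hfin : ∀ n, D n ≠ ⊤ := fun n => ENNReal.mul_ne_top (ENNReal.natCast_ne_top _)
    (ne_top_of_le_ne_top ENNReal.one_ne_top (maxW_le_one hL1 hl1' n))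
  have hDle : ∀ n, N₀ ≤ n → 1 ≤ n →
      D n ≤ (3 / 2 : ℝ≥0∞) ^ ((n - 1) / m₀ + 1) * 2⁻¹ ^ ((n - 1) / m₀) :=
    fun n h1 h2 => mul_le_mul' (hact n h1 h2) (hmaxW n h2)
  obtain ⟨hDtend, hDsum⟩ := D_bound D hm₀ hDle hfin
  have hactfin : ∀ n : ℕ, {w : List X | w.length = n ∧ restrict g w ≠ id}.Finite :=
    finite_active g
  have hcover : ∀ (m : ℕ) (T : Set (ℕ → X)) (F : List X → List X),
      (∀ u ∈ {w : List X | w.length = m ∧ restrict g w ≠ id}, (F u).length = m) →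
      T ⊆ (⋃ u ∈ {w : List X | w.length = m ∧ restrict g w ≠ id}, cylinder (F u)) →
      μ T ≤ D m := by
    intro m T F hF hT
    have h := measure_cover μ hμ (hactfin m) hF hT
    rw [hD]
    simp only [activity]
    exact h
  -- Part 1
  have hΩ : ∀ n, μ (OmegaSet g) ≤ D n := by
    intro n
    refine hcover n _ g (fun u hu => by rw [hg.1]; exact hu.1) ?_
    intro ω hω
    have hnot := omega_pre hω n
    obtain ⟨u, hgu, hru⟩ := exists_active_of_not_mem_Vset hnot
    have hul : u.length = n := by
      have h2 := hg.1 u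
      rw [hgu] at h2
      simpa using h2.symm
    refine Set.mem_biUnion (show u ∈ _ from ⟨hul, hru⟩) ?_
    rw [hgu]
    exact mem_cylinder_pre ω n
  have h1 : μ (OmegaSet g) = 0 :=
    le_antisymm (ge_of_tendsto' hDtend hΩ) zero_le
  -- Part 2
  have hTail := ENNReal.tendsto_sum_nat_add D hDsum
  set A : ℕ → Set (ℕ → X) := fun N =>
    ⋃ m : ℕ, ⋃ u ∈ {w : List X | w.length = N + m ∧ restrict g w ≠ id}, cylinder u with hA
  have hAle : ∀ N, μ (A N) ≤ ∑' m : ℕ, D (m + N) := by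
    intro N
    calc μ (A N)
        ≤ ∑' m : ℕ, μ (⋃ u ∈ {w : List X | w.length = N + m ∧ restrict g w ≠ id}, cylinder u) :=
          measure_iUnion_le _
      _ ≤ ∑' m : ℕ, D (N + m) :=
          ENNReal.tsum_le_tsum fun m => hcover (N + m) _ id (fun u hu => hu.1) subset_rfl
      _ = ∑' m : ℕ, D (m + N) := by
          congr 1
          funext m
          rw [Nat.add_comm]
  set C : List X → Set (ℕ → X) := fun p =>
    cylinder p ∩ {ω | ∀ k : ℕ, g p ++ pre (fun i => ω (p.length + i)) k ∉ Vset g} with hC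
  have hCzero : ∀ p : List X, μ (C p) = 0 := by
    intro p
    have hCk : ∀ k : ℕ, μ (C p) ≤ D (p.length + k) := by
      intro k
      refine hcover (p.length + k) _ (fun u => p ++ (g u).drop p.length) ?_ ?_
      · intro u hu
        have hgul : (g u).length = p.length + k := by rw [hg.1, hu.1]
        simp [hgul]
      · intro ω hω
        obtain ⟨hωp, hωk⟩ := hω
        have hnot := hωk k
        obtain ⟨u, hgu, hru⟩ := exists_active_of_not_mem_Vset hnot
        have hul : u.length = p.length + k := by
          have h2 := hg.1 u
          rw [hgu] at h2
          simp [hg.1 p] at h2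
          omega
        refine Set.mem_biUnion (show u ∈ _ from ⟨hul, hru⟩) ?_
        have hdrop : (g u).drop p.length = pre (fun i => ω (p.length + i)) k := by
          rw [hgu]
          have hgp : (g p).length = p.length := hg.1 p
          rw [← hgp, List.drop_left]
        show ω ∈ cylinder (p ++ List.drop p.length (g u))
        rw [hdrop]
        have hp : pre ω p.length = p := mem_cylinder_iff.1 hωp
        have hpre : p ++ pre (fun i => ω (p.length + i)) k = pre ω (p.length + k) := by
          rw [pre_add ω p.length k, hp]
        rw [hpre]
        exact mem_cylinder_pre ω _
    have htendk : Tendsto (fun k : ℕ => D (p.length + k)) atTop (𝓝 0) := by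
      have haux : Tendsto (fun k : ℕ => p.length + k) atTop atTop := by
        simpa [Nat.add_comm] using tendsto_add_atTop_nat p.length
      exact hDtend.comp haux
    exact le_antisymm (ge_of_tendsto' htendk hCk) zero_le
  have hincl : ∀ N : ℕ, treeBoundary g ⁻¹' OmegaSet g ⊆ A N ∪ ⋃ p : List X, C p := by
    intro N ω hω
    by_cases hactive : ∃ m : ℕ, restrict g (pre ω (N + m)) ≠ id
    · left
      obtain ⟨m, hm⟩ := hactive
      rw [hA]
      refine Set.mem_iUnion.2 ⟨m, ?_⟩
      exact Set.mem_biUnion (show pre ω (N + m) ∈ _ from ⟨by simp, hm⟩)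
        (mem_cylinder_pre ω (N + m))
    · right
      push_neg at hactive
      have hid : restrict g (pre ω N) = id := by
        have := hactive 0
        simpa using this
      refine Set.mem_iUnion.2 ⟨pre ω N, ?_⟩
      refine ⟨mem_cylinder_pre ω N, ?_⟩
      intro k
      simp only [pre_length]
      have heq : g (pre ω N) ++ pre (fun i => ω (N + i)) k = pre (treeBoundary g ω) (N + k) := by
        rw [← g_append_of_restrict_id hg hid, ← pre_add ω N k, pre_treeBoundary hg]
      rw [heq]
      exact omega_pre hω (N + k)
  have hCunion : μ (⋃ p : List X, C p) = 0 := measure_iUnion_null hCzero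
  have h2le : ∀ N : ℕ, μ (treeBoundary g ⁻¹' OmegaSet g) ≤ ∑' m : ℕ, D (m + N) := by
    intro N
    calc μ (treeBoundary g ⁻¹' OmegaSet g) ≤ μ (A N ∪ ⋃ p : List X, C p) :=
          measure_mono (hincl N)
      _ ≤ μ (A N) + μ (⋃ p : List X, C p) := measure_union_le _ _
      _ = μ (A N) := by rw [hCunion, add_zero]
      _ ≤ ∑' m : ℕ, D (m + N) := hAle N
  exact ⟨h1, le_antisymm (ge_of_tendsto' hTail h2le) zero_le⟩

end AutoMarkov
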